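/- arXiv:1609.04254 — 7 statements merged into one kernel-verified Lean document; each statement's English description precedes it below -/
import Mathlib

section
/- Let n be a positive integer and C the class of all partial functions from ℕⁿ to ℕ that are restrictions of some n-ary partial recursive (partial computable) function. Let A be a finite collection of subsets of ℕⁿ. Then A is strongly join permitting for C if and only if for every subcollection K of A there exists a recursively enumerable subset H of ℕⁿ with ⋃K \ ⋃(A\K) ⊆ H and H ∩ (⋃(A\K) \ ⋃K) = ∅. -/
open Set

/-- Restriction of a partial function to a set. -/
def pRestrict {α β : Type*} (f : α →. β) (A : Set α) : α →. β :=
  fun x => ⟨x ∈ A ∧ (f x).Dom, fun h => (f x).get h.2⟩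

/-- A collection `𝒜` of sets is strongly join permitting for a class `C` of
partial functions if every partial function whose domain is contained in `⋃₀ 𝒜`
and whose restriction to each member of `𝒜` belongs to `C` itself belongs to `C`. -/
def SJP {α β : Type*} (C : Set (α →. β)) (𝒜 : Set (Set α)) : Prop :=
  ∀ f : α →. β, f.Dom ⊆ ⋃₀ 𝒜 → (∀ A ∈ 𝒜, pRestrict f A ∈ C) → f ∈ C

/-- The potentially partial recursive `n`-ary functions: partial functions from
`ℕⁿ` to `ℕ` that are restrictions of some partial recursive function. -/
def PotPartrec (n : ℕ) : Set ((Fin n → ℕ) →. ℕ) :=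
  {f | ∃ φ : (Fin n → ℕ) →. ℕ, Partrec φ ∧ ∀ x y, y ∈ f x → y ∈ φ x}

open Set

section Aux
variable {X : Type*} [Primcodable X]

lemma re_eq : Partrec fun r : ℕ × ℕ => Part.assert (r.1 = r.2) fun _ => Part.some () := by
  have : ComputablePred fun r : ℕ × ℕ => r.1 = r.2 :=
    (Primrec.eq.comp Primrec.fst Primrec.snd).computablePred
  exact this.to_re

lemma check_lemma (Φ : Set X → (X →. ℕ)) (l : List (Set X))
    (hl : ∀ A ∈ l, Partrec (Φ A)) :
    ∃ c : X × ℕ →. Unit, Partrec c ∧ ∀ x y, (c (x, y)).Dom ↔ ∀ A ∈ l, y ∈ Φ A x := by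
  induction l with
  | nil =>
      exact ⟨fun _ => Part.some (), Computable.const () , by simp⟩
  | cons A t ih =>
      obtain ⟨c, hc, hspec⟩ := ih (fun B hB => hl B (List.mem_cons_of_mem _ hB))
      have hΦA : Partrec (Φ A) := hl A (List.mem_cons_self)
      have hinner : Partrec fun p : X × ℕ =>
          (Φ A p.1).bind fun z => Part.assert (z = p.2) fun _ => Part.some () := by
        apply Partrec.bind (hΦA.comp Computable.fst)
        exact re_eq.comp (Computable.snd.pair (Computable.snd.comp Computable.fst))
      refine ⟨fun p => ((Φ A p.1).bind fun z => Part.assert (z = p.2) fun _ =>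
          Part.some ()).bind fun _ => c p, ?_, ?_⟩
      · exact hinner.bind (hc.comp Computable.fst)
      · intro x y
        constructor
        · intro hdom
          obtain ⟨u, hu⟩ := Part.dom_iff_mem.1 hdom
          obtain ⟨v, hv, hu2⟩ := Part.mem_bind_iff.1 hu
          obtain ⟨z, hz, hv2⟩ := Part.mem_bind_iff.1 hv
          obtain ⟨hzy, -⟩ := Part.mem_assert_iff.1 hv2
          rw [hzy] at hz
          intro B hB
          rcases List.mem_cons.1 hB with rfl | hB
          · exact hz
          · exact (hspec x y).1 (Part.dom_iff_mem.2 ⟨u, hu2⟩) B hB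
        · intro h
          have h1 : y ∈ Φ A x := h A (List.mem_cons_self)
          have h2 : (c (x, y)).Dom := (hspec x y).2 fun B hB => h B (List.mem_cons_of_mem _ hB)
          obtain ⟨u, hu⟩ := Part.dom_iff_mem.1 h2
          refine Part.dom_iff_mem.2 ⟨u, Part.mem_bind_iff.2 ⟨(), ?_, hu⟩⟩
          exact Part.mem_bind_iff.2 ⟨y, h1, Part.mem_assert_iff.2 ⟨rfl, Part.mem_some _⟩⟩

lemma branch_lemma (Φ : Set X → (X →. ℕ)) (H : Set X)
    (hH : Partrec fun a : X => Part.assert (a ∈ H) fun _ => Part.some ())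
    (l : List (Set X)) (hl : ∀ A ∈ l, Partrec (Φ A)) :
    ∃ ψ : X →. ℕ, Partrec ψ ∧ ∀ x y, y ∈ ψ x ↔ x ∈ H ∧ l ≠ [] ∧ ∀ A ∈ l, y ∈ Φ A x := by
  cases l with
  | nil => exact ⟨fun _ => Part.none, Partrec.none, by simp⟩
  | cons A t =>
      obtain ⟨c, hc, hspec⟩ := check_lemma Φ (A :: t) hl
      have hΦA : Partrec (Φ A) := hl A (List.mem_cons_self)
      have hmap : Partrec fun q : X × ℕ => (c q).map fun _ : Unit => q.2 :=
        hc.map ((Computable.snd.comp Computable.fst).to₂)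
      have hinner : Partrec fun x : X => (Φ A x).bind fun y => (c (x, y)).map fun _ => y :=
        hΦA.bind hmap
      refine ⟨fun x => (Part.assert (x ∈ H) fun _ => Part.some ()).bind fun _ =>
          (Φ A x).bind fun y => (c (x, y)).map fun _ => y, ?_, ?_⟩
      · exact hH.bind (hinner.comp Computable.fst)
      · intro x y
        constructor
        · intro hy
          obtain ⟨u, hu, hy2⟩ := Part.mem_bind_iff.1 hy
          obtain ⟨hx, -⟩ := Part.mem_assert_iff.1 hu
          obtain ⟨z, hz, hy3⟩ := Part.mem_bind_iff.1 hy2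
          obtain ⟨v, hv, hzy⟩ := (Part.mem_map_iff _).1 hy3
          have hzy' : z = y := hzy
          rw [hzy'] at hv
          exact ⟨hx, by simp, (hspec x y).1 (Part.dom_iff_mem.2 ⟨v, hv⟩)⟩
        · rintro ⟨hx, -, h⟩
          obtain ⟨v, hv⟩ := Part.dom_iff_mem.1 ((hspec x y).2 h)
          refine Part.mem_bind_iff.2 ⟨(), Part.mem_assert_iff.2 ⟨hx, Part.mem_some _⟩, ?_⟩
          exact Part.mem_bind_iff.2 ⟨y, h A (List.mem_cons_self),
            (Part.mem_map_iff _).2 ⟨v, hv, rfl⟩⟩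

lemma merge_lemma (M : List (X →. ℕ)) (hM : ∀ ψ ∈ M, Partrec ψ) :
    ∃ k : X →. ℕ, Partrec k ∧ ∀ x, (∀ y ∈ k x, ∃ ψ ∈ M, y ∈ ψ x) ∧
      ((k x).Dom ↔ ∃ ψ ∈ M, (ψ x).Dom) := by
  induction M with
  | nil => exact ⟨fun _ => Part.none, Partrec.none, by simp⟩
  | cons ψ t ih =>
      obtain ⟨k, hk, hKspec⟩ := ih (fun g hg => hM g (List.mem_cons_of_mem _ hg))
      obtain ⟨k', hk', hK'⟩ := Partrec.merge' (hM ψ (List.mem_cons_self)) hk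
      refine ⟨k', hk', fun x => ⟨?_, ?_⟩⟩
      · intro y hy
        rcases (hK' x).1 y hy with h | h
        · exact ⟨ψ, List.mem_cons_self, h⟩
        · obtain ⟨g, hg, hyg⟩ := (hKspec x).1 y h
          exact ⟨g, List.mem_cons_of_mem _ hg, hyg⟩
      · rw [(hK' x).2, (hKspec x).2]
        simp

lemma list_choice {α β : Type*} {R : α → β → Prop} :
    ∀ L : List α, (∀ a ∈ L, ∃ b, R a b) →
      ∃ M : List β, (∀ b ∈ M, ∃ a ∈ L, R a b) ∧ (∀ a ∈ L, ∃ b ∈ M, R a b) := by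
  intro L
  induction L with
  | nil => exact fun _ => ⟨[], by simp, by simp⟩
  | cons a t ih =>
      intro h
      obtain ⟨b, hb⟩ := h a (List.mem_cons_self)
      obtain ⟨M, hM1, hM2⟩ := ih fun a' ha' => h a' (List.mem_cons_of_mem _ ha')
      refine ⟨b :: M, ?_, ?_⟩
      · intro b' hb'
        rcases List.mem_cons.1 hb' with rfl | hb'
        · exact ⟨a, List.mem_cons_self, hb⟩
        · obtain ⟨a', ha', hR⟩ := hM1 b' hb'
          exact ⟨a', List.mem_cons_of_mem _ ha', hR⟩
      · intro a' ha'
        rcases List.mem_cons.1 ha' with rfl | ha'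
        · exact ⟨b, List.mem_cons_self, hb⟩
        · obtain ⟨b', hb', hR⟩ := hM2 a' ha'
          exact ⟨b', List.mem_cons_of_mem _ hb', hR⟩

lemma part_mem_mk_iff {α : Type*} {p : Prop} {g : p → α} {a : α} :
    a ∈ (⟨p, g⟩ : Part α) ↔ ∃ h : p, g h = a := Iff.rfl

lemma mem_pRestrict {α β : Type*} {f : α →. β} {A : Set α} {x : α} {y : β} :
    y ∈ pRestrict f A x ↔ x ∈ A ∧ y ∈ f x := by
  show y ∈ (⟨x ∈ A ∧ (f x).Dom, fun h => (f x).get h.2⟩ : Part β) ↔ _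
  rw [part_mem_mk_iff]
  constructor
  · rintro ⟨⟨h1, h2⟩, rfl⟩
    exact ⟨h1, Part.get_mem h2⟩
  · rintro ⟨h1, hy⟩
    exact ⟨⟨h1, Part.dom_iff_mem.2 ⟨y, hy⟩⟩, Part.get_eq_of_mem hy _⟩

end Aux


theorem stmt_3 (n : ℕ) (hn : 0 < n) (𝒜 : Set (Set (Fin n → ℕ))) (hfin : 𝒜.Finite) :
    SJP (PotPartrec n) 𝒜 ↔
      ∀ 𝒦 ⊆ 𝒜, ∃ H : Set (Fin n → ℕ), REPred (· ∈ H) ∧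
        ⋃₀ 𝒦 \ ⋃₀ (𝒜 \ 𝒦) ⊆ H ∧ H ∩ (⋃₀ (𝒜 \ 𝒦) \ ⋃₀ 𝒦) = ∅ := by
  classical
  constructor
  · -- SJP implies separation
    intro hsjp 𝒦 h𝒦
    set P : Set (Fin n → ℕ) := ⋃₀ 𝒦 \ ⋃₀ (𝒜 \ 𝒦) with hP
    set Q : Set (Fin n → ℕ) := ⋃₀ (𝒜 \ 𝒦) \ ⋃₀ 𝒦 with hQ
    have hdom : PFun.Dom (fun x : Fin n → ℕ =>
        (⟨x ∈ P ∨ x ∈ Q, fun _ => if x ∈ P then (1 : ℕ) else 0⟩ : Part ℕ)) ⊆ ⋃₀ 𝒜 := by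
      intro x hx
      have hx' : x ∈ P ∨ x ∈ Q := hx
      rcases hx' with hx' | hx'
      · exact (sUnion_mono h𝒦) hx'.1
      · exact (sUnion_mono diff_subset) hx'.1
    have hmem1 : ∀ x, x ∈ P → (1 : ℕ) ∈
        ((⟨x ∈ P ∨ x ∈ Q, fun _ => if x ∈ P then (1 : ℕ) else 0⟩ : Part ℕ)) := fun x hx =>
      part_mem_mk_iff.2 ⟨Or.inl hx, if_pos hx⟩
    have hmem0 : ∀ x, x ∈ Q → (0 : ℕ) ∈
        ((⟨x ∈ P ∨ x ∈ Q, fun _ => if x ∈ P then (1 : ℕ) else 0⟩ : Part ℕ)) := fun x hx =>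
      part_mem_mk_iff.2 ⟨Or.inr hx, if_neg (fun h => hx.2 h.1)⟩
    have hres : ∀ A ∈ 𝒜, pRestrict (fun x : Fin n → ℕ =>
        (⟨x ∈ P ∨ x ∈ Q, fun _ => if x ∈ P then (1 : ℕ) else 0⟩ : Part ℕ)) A ∈ PotPartrec n := by
      intro A hA
      by_cases hA𝒦 : A ∈ 𝒦
      · refine ⟨fun _ => Part.some 1, Computable.const 1, ?_⟩
        intro x y hy
        obtain ⟨hxA, hyf⟩ := mem_pRestrict.1 hy
        obtain ⟨hd, hg⟩ := part_mem_mk_iff.1 hyf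
        have hxP : x ∈ P := by
          rcases hd with h | h
          · exact h
          · exact absurd ⟨A, hA𝒦, hxA⟩ h.2
        rw [if_pos hxP] at hg
        simp [← hg]
      · refine ⟨fun _ => Part.some 0, Computable.const 0, ?_⟩
        intro x y hy
        obtain ⟨hxA, hyf⟩ := mem_pRestrict.1 hy
        obtain ⟨hd, hg⟩ := part_mem_mk_iff.1 hyf
        have hxQ : x ∈ Q := by
          rcases hd with h | h
          · exact absurd ⟨A, ⟨hA, hA𝒦⟩, hxA⟩ h.2
          · exact h
        have hxnP : x ∉ P := fun h => hxQ.2 h.1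
        rw [if_neg hxnP] at hg
        simp [← hg]
    obtain ⟨φ, hφ, hext⟩ := hsjp _ hdom hres
    have hwpr : Partrec (fun x : Fin n → ℕ =>
        (φ x).bind fun z => Part.assert (z = 1) fun _ => Part.some ()) :=
      hφ.bind (re_eq.comp (Computable.snd.pair (Computable.const 1)))
    refine ⟨{x | ((φ x).bind fun z => Part.assert (z = 1) fun _ => Part.some ()).Dom},
      hwpr.dom_re, ?_, ?_⟩
    · intro x hx
      have h1 : (1 : ℕ) ∈ φ x := hext x 1 (hmem1 x hx)
      show ((φ x).bind fun z => Part.assert (z = 1) fun _ => Part.some ()).Dom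
      refine Part.dom_iff_mem.2 ⟨(), Part.mem_bind_iff.2 ⟨1, h1, ?_⟩⟩
      exact Part.mem_assert_iff.2 ⟨rfl, Part.mem_some _⟩
    · rw [eq_empty_iff_forall_notMem]
      rintro x ⟨hxH, hxQ⟩
      obtain ⟨u, hu⟩ := Part.dom_iff_mem.1 hxH
      obtain ⟨z, hz, hu2⟩ := Part.mem_bind_iff.1 hu
      obtain ⟨hz1, -⟩ := Part.mem_assert_iff.1 hu2
      have h0 : (0 : ℕ) ∈ φ x := hext x 0 (hmem0 x hxQ)
      rw [hz1] at hz
      exact absurd (Part.mem_unique h0 hz) (by norm_num)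
  · -- separation implies SJP
    intro hsep f hdom hres
    -- extensions of the restrictions
    have hch : ∀ A : Set (Fin n → ℕ), ∃ g : (Fin n → ℕ) →. ℕ,
        A ∈ 𝒜 → Partrec g ∧ ∀ x y, y ∈ pRestrict f A x → y ∈ g x := by
      intro A
      by_cases h : A ∈ 𝒜
      · obtain ⟨g, h1, h2⟩ := hres A h
        exact ⟨g, fun _ => ⟨h1, h2⟩⟩
      · exact ⟨fun _ => Part.none, fun h' => absurd h' h⟩
    choose Φ hΦ using hch
    -- the separators
    have hch2 : ∀ S : Finset (Set (Fin n → ℕ)), ∃ Hst : Set (Fin n → ℕ),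
        (↑S : Set (Set (Fin n → ℕ))) ⊆ 𝒜 →
          (Partrec fun a : Fin n → ℕ => Part.assert (a ∈ Hst) fun _ => Part.some ()) ∧
          ⋃₀ (↑S : Set (Set (Fin n → ℕ))) \ ⋃₀ (𝒜 \ ↑S) ⊆ Hst ∧
          Hst ∩ (⋃₀ (𝒜 \ (↑S : Set (Set (Fin n → ℕ)))) \ ⋃₀ ↑S) = ∅ := by
      intro S
      by_cases h : (↑S : Set (Set (Fin n → ℕ))) ⊆ 𝒜
      · obtain ⟨H, h1, h2, h3⟩ := hsep ↑S h
        exact ⟨H, fun _ => ⟨h1, h2, h3⟩⟩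
      · exact ⟨∅, fun h' => absurd h' h⟩
    choose Hs hHs using hch2
    -- the list of branches
    have hsub : ∀ S ∈ hfin.toFinset.powerset.toList, (↑S : Set (Set (Fin n → ℕ))) ⊆ 𝒜 := by
      intro S hS A hA
      have : S ⊆ hfin.toFinset := Finset.mem_powerset.1 (Finset.mem_toList.1 hS)
      exact hfin.mem_toFinset.1 (this hA)
    have hbranch : ∀ S ∈ hfin.toFinset.powerset.toList, ∃ ψ : (Fin n → ℕ) →. ℕ, Partrec ψ ∧
        ∀ x y, y ∈ ψ x ↔ x ∈ Hs S ∧ S.toList ≠ [] ∧ ∀ A ∈ S.toList, y ∈ Φ A x := by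
      intro S hS
      exact branch_lemma Φ (Hs S) ((hHs S (hsub S hS)).1) S.toList
        (fun A hA => (hΦ A (hsub S hS (Finset.mem_toList.1 hA))).1)
    obtain ⟨M, hM1, hM2⟩ := list_choice _ hbranch
    have hMpr : ∀ ψ ∈ M, Partrec ψ := by
      intro ψ hψ
      obtain ⟨S, -, h, -⟩ := hM1 ψ hψ
      exact h
    obtain ⟨k, hk, hK⟩ := merge_lemma M hMpr
    refine ⟨k, hk, ?_⟩
    intro x y hyf
    have hfd : x ∈ f.Dom := Part.dom_iff_mem.2 ⟨y, hyf⟩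
    obtain ⟨B, hB𝒜, hxB⟩ := hdom hfd
    have hSxin : hfin.toFinset.filter (fun A => x ∈ A) ∈ hfin.toFinset.powerset.toList :=
      Finset.mem_toList.2 (Finset.mem_powerset.2 (Finset.filter_subset _ _))
    have hBSx : B ∈ hfin.toFinset.filter (fun A => x ∈ A) :=
      Finset.mem_filter.2 ⟨hfin.mem_toFinset.2 hB𝒜, hxB⟩
    obtain ⟨ψ, hψM, hψR⟩ := hM2 _ hSxin
    have hψspec := hψR.2
    -- x lies in the separator for Sx
    have hxH : x ∈ Hs (hfin.toFinset.filter (fun A => x ∈ A)) := by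
      apply (hHs _ (hsub _ hSxin)).2.1
      constructor
      · exact ⟨B, hBSx, hxB⟩
      · rintro ⟨C, ⟨hC𝒜, hCnot⟩, hxC⟩
        exact hCnot (Finset.mem_coe.2 (Finset.mem_filter.2 ⟨hfin.mem_toFinset.2 hC𝒜, hxC⟩))
    have hyψ : y ∈ ψ x := by
      refine (hψspec x y).2 ⟨hxH, ?_, ?_⟩
      · simp only [ne_eq, Finset.toList_eq_nil]
        exact Finset.ne_empty_of_mem hBSx
      · intro A hA
        have hASx : A ∈ hfin.toFinset.filter (fun A => x ∈ A) := Finset.mem_toList.1 hA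
        have hxA : x ∈ A := (Finset.mem_filter.1 hASx).2
        have hA𝒜 : A ∈ 𝒜 := hsub _ hSxin hASx
        exact (hΦ A hA𝒜).2 x y (mem_pRestrict.2 ⟨hxA, hyf⟩)
    have hkdom : (k x).Dom := (hK x).2.2 ⟨ψ, hψM, Part.dom_iff_mem.2 ⟨y, hyψ⟩⟩
    have hy'k : (k x).get hkdom ∈ k x := Part.get_mem _
    obtain ⟨ψ', hψ'M, hy'ψ'⟩ := (hK x).1 _ hy'k
    obtain ⟨S', hS'SL, -, hψ'spec⟩ := hM1 ψ' hψ'M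
    obtain ⟨hxH', -, hall⟩ := (hψ'spec x _).1 hy'ψ'
    have hS'𝒜 := hsub S' hS'SL
    -- find A ∈ S' with x ∈ A
    have hAS' : ∃ A ∈ S', x ∈ A := by
      by_contra hno
      push_neg at hno
      have hx1 : x ∈ ⋃₀ (𝒜 \ (↑S' : Set (Set (Fin n → ℕ)))) :=
        ⟨B, ⟨hB𝒜, fun hBS' => hno B (Finset.mem_coe.1 hBS') hxB⟩, hxB⟩
      have hx2 : x ∉ ⋃₀ (↑S' : Set (Set (Fin n → ℕ))) := by
        rintro ⟨C, hCS', hxC⟩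
        exact hno C (Finset.mem_coe.1 hCS') hxC
      exact (eq_empty_iff_forall_notMem.1 ((hHs S' hS'𝒜).2.2)) x ⟨hxH', hx1, hx2⟩
    obtain ⟨A, hAS', hxA⟩ := hAS'
    have hy'Φ : (k x).get hkdom ∈ Φ A x := hall A (Finset.mem_toList.2 hAS')
    have hyΦ : y ∈ Φ A x := (hΦ A (hS'𝒜 hAS')).2 x y (mem_pRestrict.2 ⟨hxA, hyf⟩)
    have heq : (k x).get hkdom = y := Part.mem_unique hy'Φ hyΦ
    rw [← heq]
    exact hy'k
end

section
/- Any finite collection of recursively enumerable subsets of ℕⁿ is strongly join permitting for the class of potentially partial recursive n-ary functions. -/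
open Set

/-- Merge a finite family of partial recursive functions into one whose values
come from the family and which is defined whenever some member is defined. -/
lemma merge_finite {α σ : Type*} [Primcodable α] [Primcodable σ]
    {ι : Type*} (𝒜 : Set ι) (hfin : 𝒜.Finite) (ψ : ι → (α →. σ))
    (hψ : ∀ A ∈ 𝒜, Partrec (ψ A)) :
    ∃ k : α →. σ, Partrec k ∧ ∀ x,
      (∀ y ∈ k x, ∃ A ∈ 𝒜, y ∈ ψ A x) ∧ ((∃ A ∈ 𝒜, (ψ A x).Dom) → (k x).Dom) := by
  revert hψ
  refine Set.Finite.induction_on _ hfin ?_ ?_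
  · exact fun _ => ⟨fun _ => Part.none, Partrec.none, fun x =>
      ⟨fun y hy => absurd hy (Part.notMem_none y), fun ⟨A, hA, _⟩ => hA.elim⟩⟩
  · intro A s _ _ ih hψ'
    obtain ⟨k, hk, H⟩ := ih fun B hB => hψ' B (Set.mem_insert_of_mem _ hB)
    obtain ⟨k', hk', H'⟩ := Partrec.merge' (hψ' A (Set.mem_insert _ _)) hk
    refine ⟨k', hk', fun x => ⟨fun y hy => ?_, fun ⟨B, hB, hdom⟩ => ?_⟩⟩
    · rcases (H' x).1 y hy with h | h
      · exact ⟨A, Set.mem_insert _ _, h⟩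
      · obtain ⟨B, hB, hb⟩ := (H x).1 y h
        exact ⟨B, Set.mem_insert_of_mem _ hB, hb⟩
    · rcases Set.mem_insert_iff.1 hB with rfl | hB
      · exact (H' x).2.mpr (Or.inl hdom)
      · exact (H' x).2.mpr (Or.inr ((H x).2 ⟨B, hB, hdom⟩))

theorem stmt_5 (n : ℕ) (hn : 0 < n) (𝒜 : Set (Set (Fin n → ℕ))) (hfin : 𝒜.Finite)
    (hre : ∀ A ∈ 𝒜, REPred (· ∈ A)) :
    SJP (PotPartrec n) 𝒜 := by
  intro f hdom hres
  -- choose an extension φ A of pRestrict f A for each A ∈ 𝒜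
  have hchoice : ∀ A : Set (Fin n → ℕ), ∃ φ : (Fin n → ℕ) →. ℕ,
      A ∈ 𝒜 → Partrec φ ∧ ∀ x y, y ∈ pRestrict f A x → y ∈ φ x := by
    intro A
    by_cases hA : A ∈ 𝒜
    · obtain ⟨φ, hφ, hext⟩ := hres A hA
      exact ⟨φ, fun _ => ⟨hφ, hext⟩⟩
    · exact ⟨fun _ => Part.none, fun h => absurd h hA⟩
  choose φ hφ using hchoice
  -- guard φ A by membership in A
  set ψ : Set (Fin n → ℕ) → ((Fin n → ℕ) →. ℕ) :=
    fun A x => Part.assert (x ∈ A) fun _ => φ A x with hψdef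
  have hψmem : ∀ A x y, y ∈ ψ A x ↔ x ∈ A ∧ y ∈ φ A x := by
    intro A x y; simp [hψdef, Part.mem_assert_iff]
  have hψpr : ∀ A ∈ 𝒜, Partrec (ψ A) := by
    intro A hA
    have h1 := hre A hA
    have h2 := (hφ A hA).1
    have : Partrec fun x => (Part.assert (x ∈ A) fun _ => Part.some ()).bind
        fun _ => φ A x := h1.bind (h2.comp Computable.fst).to₂
    refine this.of_eq fun x => Part.ext fun y => ?_
    simp [hψdef, Part.mem_assert_iff]
  obtain ⟨k, hk, H⟩ := merge_finite 𝒜 hfin ψ hψpr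
  refine ⟨k, hk, fun x y hy => ?_⟩
  -- f x is defined with value y; x lies in some A ∈ 𝒜
  have hfd : (f x).Dom := Part.dom_iff_mem.2 ⟨y, hy⟩
  obtain ⟨A, hA, hxA⟩ := hdom hfd
  -- ψ A x is defined (with value y)
  have hyψ : y ∈ ψ A x := by
    rw [hψmem]
    exact ⟨hxA, (hφ A hA).2 x y ⟨⟨hxA, hfd⟩, Part.get_eq_of_mem hy hfd⟩⟩
  have hkd : (k x).Dom := (H x).2 ⟨A, hA, Part.dom_iff_mem.2 ⟨y, hyψ⟩⟩
  -- any value of k x must equal y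
  obtain ⟨B, hB, hzψ⟩ := (H x).1 _ (Part.get_mem hkd)
  rw [hψmem] at hzψ
  obtain ⟨hxB, hzφ⟩ := hzψ
  have hyφ : y ∈ φ B x := (hφ B hB).2 x y ⟨⟨hxB, hfd⟩, Part.get_eq_of_mem hy hfd⟩
  have : (k x).get hkd = y := Part.mem_unique hzφ hyφ
  exact this ▸ Part.get_mem hkd
end

section
/- Let E be a finite collection of recursively enumerable subsets of ℕⁿ, and let A = {ℕⁿ \ E | E ∈ E} be the collection of their complements. Then A is strongly join permitting for the class of potentially partial recursive n-ary functions. -/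
open Set

namespace SJPAux

open Nat.Partrec (Code)
open Nat.Partrec.Code

/-- auxiliary step for the agreement computation -/
def step2 (v : ℕ) (r : Option (Option ℕ)) : Option (Option ℕ) :=
  Option.casesOn r none fun o =>
    Option.casesOn o (some (some v)) fun w => if v = w then some (some v) else none

def step (o1 o2 : Option ℕ) (r : Option (Option ℕ)) : Option (Option ℕ) :=
  Option.casesOn o1 (Option.casesOn o2 none fun v => step2 v r) fun _ => r

/-- `combineG P m s` computes, for the "active" pairs (those whose first code has not
yet halted on `m` within `s` steps): `some none` if there are no active pairs,
`some (some v)` if all active second codes halt within `s` steps on `m` with the common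
value `v`, and `none` otherwise. -/
def combineG : List (Code × Code) → ℕ → ℕ → Option (Option ℕ)
  | [], _, _ => some none
  | p :: P, m, s => step (evaln s p.1 m) (evaln s p.2 m) (combineG P m s)

def combineF (P : List (Code × Code)) (m s : ℕ) : Option ℕ :=
  Option.map (fun o => Option.getD o 0) (combineG P m s)

theorem step2_prim : Primrec₂ step2 :=
  Primrec.option_casesOn Primrec.snd (Primrec.const none)
    (Primrec.option_casesOn Primrec.snd
      (Primrec.option_some.comp (Primrec.option_some.comp (Primrec.fst.comp Primrec.fst)))
      ((Primrec.ite (Primrec.eq.comp (Primrec.fst.comp (Primrec.fst.comp Primrec.fst))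
          Primrec.snd)
        (Primrec.option_some.comp
          (Primrec.option_some.comp (Primrec.fst.comp (Primrec.fst.comp Primrec.fst))))
        (Primrec.const none))))

theorem step_prim :
    Primrec fun a : (Option ℕ × Option ℕ) × Option (Option ℕ) => step a.1.1 a.1.2 a.2 :=
  Primrec.option_casesOn (Primrec.fst.comp Primrec.fst)
    (Primrec.option_casesOn (Primrec.snd.comp Primrec.fst) (Primrec.const none)
      (step2_prim.comp Primrec.snd (Primrec.snd.comp Primrec.fst)))
    ((Primrec.snd.comp Primrec.fst).to₂)

theorem combineG_prim (P : List (Code × Code)) : Primrec₂ (combineG P) := by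
  induction P with
  | nil => exact (Primrec.const (some none)).to₂
  | cons p P ih =>
    have e : ∀ c : Code, Primrec fun q : ℕ × ℕ => evaln q.2 c q.1 := fun c =>
      primrec_evaln.comp ((Primrec.snd.pair (Primrec.const c)).pair Primrec.fst)
    exact (step_prim.comp (((e p.1).pair (e p.2)).pair ih)).to₂

theorem combineF_prim (P : List (Code × Code)) : Primrec₂ (combineF P) :=
  (Primrec.option_map (combineG_prim P)
    ((Primrec.option_getD.comp Primrec.snd (Primrec.const 0)).to₂)).to₂

theorem combineG_none_iff {P : List (Code × Code)} {m s : ℕ} :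
    combineG P m s = some none ↔ ∀ p ∈ P, (evaln s p.1 m).isSome := by
  induction P with
  | nil => simp [combineG]
  | cons p P ih =>
    simp only [combineG, step, List.mem_cons]
    cases h1 : evaln s p.1 m with
    | some a =>
      simp only [Option.casesOn]
      constructor
      · intro h q hq
        rcases hq with rfl | hq
        · simp [h1]
        · exact ih.1 h q hq
      · intro h
        exact ih.2 fun q hq => h q (Or.inr hq)
    | none =>
      constructor
      · intro h
        exfalso
        cases h2 : evaln s p.2 m with
        | none => simp [h2] at h
        | some v =>
          simp only [h2] at h
          cases hr : combineG P m s with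
          | none => simp [step2, hr] at h
          | some o =>
            cases o with
            | none => simp [step2, hr] at h
            | some w =>
              by_cases hvw : v = w <;> simp [step2, hr, hvw] at h
      · intro h
        have := h p (Or.inl rfl)
        simp [h1] at this

theorem combineG_some_spec {P : List (Code × Code)} {m s v : ℕ}
    (h : combineG P m s = some (some v)) :
    ∀ p ∈ P, evaln s p.1 m = none → evaln s p.2 m = some v := by
  induction P with
  | nil => simp [combineG] at h
  | cons p P ih =>
    intro q hq hq1
    rw [List.mem_cons] at hq
    simp only [combineG, step] at h
    cases h1 : evaln s p.1 m with
    | some a =>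
      simp only [h1] at h
      rcases hq with rfl | hq
      · rw [hq1] at h1; cases h1
      · exact ih h q hq hq1
    | none =>
      simp only [h1] at h
      cases h2 : evaln s p.2 m with
      | none => simp [h2] at h
      | some w =>
        simp only [h2] at h
        cases hr : combineG P m s with
        | none => simp [step2, hr] at h
        | some o =>
          cases o with
          | none =>
            simp only [step2, hr] at h
            injection h with h; injection h with h
            subst h
            rcases hq with rfl | hq
            · exact h2
            · have := combineG_none_iff.1 hr q hq
              rw [hq1] at this; simp at this
          | some u =>
            by_cases hwu : w = u
            · subst hwu
              simp only [step2, hr, if_pos rfl] at h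
              injection h with h; injection h with h
              subst h
              rcases hq with rfl | hq
              · exact h2
              · exact ih hr q hq hq1
            · simp [step2, hr, hwu] at h

theorem combineG_complete {P : List (Code × Code)} {m s v : ℕ}
    (h : ∀ p ∈ P, evaln s p.1 m = none → evaln s p.2 m = some v) :
    combineG P m s = some none ∨ combineG P m s = some (some v) := by
  induction P with
  | nil => exact Or.inl rfl
  | cons p P ih =>
    have ih' := ih fun q hq => h q (List.mem_cons_of_mem _ hq)
    simp only [combineG, step]
    cases h1 : evaln s p.1 m with
    | some a => exact ih'
    | none =>
      have h2 : evaln s p.2 m = some v := h p List.mem_cons_self h1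
      rw [h2]
      rcases ih' with hr | hr <;> rw [hr] <;> simp [step2]

theorem exists_bound {β : Type*} {P : List β} {Q : β → ℕ → Prop}
    (mono : ∀ p s t, s ≤ t → Q p s → Q p t) (h : ∀ p ∈ P, ∃ s, Q p s) :
    ∃ s, ∀ p ∈ P, Q p s := by
  induction P with
  | nil => exact ⟨0, by simp⟩
  | cons p P ih =>
    obtain ⟨s1, hs1⟩ := ih fun q hq => h q (List.mem_cons_of_mem _ hq)
    obtain ⟨s2, hs2⟩ := h p List.mem_cons_self
    refine ⟨max s1 s2, ?_⟩
    intro q hq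
    rw [List.mem_cons] at hq
    rcases hq with rfl | hq
    · exact mono _ _ _ (le_max_right _ _) hs2
    · exact mono _ _ _ (le_max_left _ _) (hs1 q hq)

end SJPAux

theorem stmt_6 (n : ℕ) (hn : 0 < n) (ℰ : Set (Set (Fin n → ℕ))) (hfin : ℰ.Finite)
    (hre : ∀ E ∈ ℰ, REPred (· ∈ E)) :
    SJP (PotPartrec n) ((fun E => Eᶜ) '' ℰ) := by
  classical
  open SJPAux Nat.Partrec.Code in
  intro f hdom hres
  letI inst : Primcodable (Fin n → ℕ) := inferInstance
  let enc : (Fin n → ℕ) → ℕ := fun x => @Encodable.encode _ inst.toEncodable x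
  have henc : Primrec enc := Primrec.encode
  have hdec : ∀ x : Fin n → ℕ,
      (@Encodable.decode _ inst.toEncodable (enc x)) = some x := fun x => @Encodable.encodek _ inst.toEncodable x
  -- choose codes for each `E ∈ ℰ`
  have key : ∀ E ∈ ℰ, ∃ cd : Nat.Partrec.Code × Nat.Partrec.Code,
      (∀ x : Fin n → ℕ, ((eval cd.1 (enc x)).Dom ↔ x ∈ E)) ∧
      (∀ (x : Fin n → ℕ) (y : ℕ), x ∉ E → y ∈ f x → y ∈ eval cd.2 (enc x)) := by
    intro E hE
    obtain ⟨c, hc⟩ := exists_code.1 (hre E hE)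
    obtain ⟨φ, hφ, hext⟩ := hres Eᶜ ⟨E, hE, rfl⟩
    obtain ⟨d, hd⟩ := exists_code.1 hφ
    refine ⟨(c, d), fun x => ?_, fun x y hx hy => ?_⟩
    · rw [hc]
      simp only [hdec, Part.coe_some, Part.bind_eq_bind, Part.bind_some]
      constructor
      · intro h
        obtain ⟨a, ha⟩ := Part.dom_iff_mem.1 h
        obtain ⟨b, hb, -⟩ := (Part.mem_map_iff _).1 ha
        obtain ⟨hp, -⟩ := Part.mem_assert_iff.1 hb
        exact hp
      · intro h
        exact Part.dom_iff_mem.2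
          ⟨Encodable.encode (), Part.mem_map _ (Part.mem_assert h (Part.mem_some _))⟩
    · have hyr : y ∈ pRestrict f Eᶜ x := by
        obtain ⟨hyd, rfl⟩ := hy
        exact ⟨⟨hx, hyd⟩, rfl⟩
      have hyφ := hext x y hyr
      rw [hd]
      simp only [hdec, Part.coe_some, Part.bind_eq_bind, Part.bind_some]
      simpa using Part.mem_map Encodable.encode hyφ
  -- choice function
  let g : Set (Fin n → ℕ) → Nat.Partrec.Code × Nat.Partrec.Code := fun E =>
    if h : E ∈ ℰ then (key E h).choose else (Nat.Partrec.Code.zero, Nat.Partrec.Code.zero)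
  have gspec1 : ∀ E (hE : E ∈ ℰ) (x : Fin n → ℕ),
      (eval (g E).1 (enc x)).Dom ↔ x ∈ E := by
    intro E hE x
    simp only [g, dif_pos hE]
    exact ((key E hE).choose_spec).1 x
  have gspec2 : ∀ E (hE : E ∈ ℰ) (x : Fin n → ℕ) (y : ℕ), x ∉ E → y ∈ f x →
      y ∈ eval (g E).2 (enc x) := by
    intro E hE x y hx hy
    simp only [g, dif_pos hE]
    exact ((key E hE).choose_spec).2 x y hx hy
  let P : List (Nat.Partrec.Code × Nat.Partrec.Code) := hfin.toFinset.toList.map g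
  have memP : ∀ p ∈ P, ∃ E ∈ ℰ, p = g E := by
    intro p hp
    obtain ⟨E, hE, rfl⟩ := List.mem_map.1 hp
    exact ⟨E, by simpa using hE, rfl⟩
  have memP' : ∀ E ∈ ℰ, g E ∈ P := by
    intro E hE
    exact List.mem_map.2 ⟨E, by simpa using hE, rfl⟩
  refine ⟨fun x => Nat.rfindOpt fun s => combineF P (enc x) s, ?_, ?_⟩
  · exact Partrec.rfindOpt
      (((combineF_prim P).comp (henc.comp Primrec.fst) Primrec.snd).to_comp.to₂)
  · intro x y hy
    set m := enc x with hm
    -- x is in the domain of f, hence misses some E₀ ∈ ℰ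
    have hxdom : x ∈ f.Dom := (PFun.mem_dom f x).2 ⟨y, hy⟩
    obtain ⟨A, ⟨E₀, hE₀, rfl⟩, hx₀⟩ := hdom hxdom
    have hx₀' : x ∉ E₀ := hx₀
    -- the first code of `g E₀` never halts on `m`
    have hE₀none : ∀ s, evaln s (g E₀).1 m = none := by
      intro s
      cases h : evaln s (g E₀).1 m with
      | none => rfl
      | some a =>
        exfalso
        have : (eval (g E₀).1 m).Dom := Part.dom_iff_mem.2 ⟨a, evaln_sound h⟩
        exact hx₀' ((gspec1 E₀ hE₀ x).1 this)
    -- any output of combineF is y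
    have claimA : ∀ s u, combineF P m s = some u → u = y := by
      intro s u hu
      unfold combineF at hu
      cases hG : combineG P m s with
      | none => rw [hG] at hu; cases hu
      | some o =>
        cases o with
        | none =>
          exfalso
          have := combineG_none_iff.1 hG (g E₀) (memP' E₀ hE₀)
          rw [hE₀none s] at this
          simp at this
        | some v =>
          rw [hG] at hu
          simp only [Option.map_some, Option.getD_some, Option.some_inj] at hu
          subst hu
          have h2 := combineG_some_spec hG (g E₀) (memP' E₀ hE₀) (hE₀none s)
          have hv : v ∈ eval (g E₀).2 m := evaln_sound h2
          have hyv : y ∈ eval (g E₀).2 m := gspec2 E₀ hE₀ x y hx₀' hy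
          exact Part.mem_unique hv hyv
    -- combineF eventually halts
    have claimB : ∃ s, (combineF P m s).isSome := by
      have hQ : ∀ p ∈ P, ∃ s,
          ((evaln s p.1 m).isSome ∨ evaln s p.2 m = some y) := by
        intro p hp
        obtain ⟨E, hE, rfl⟩ := memP p hp
        by_cases hxE : x ∈ E
        · have : (eval (g E).1 m).Dom := (gspec1 E hE x).2 hxE
          obtain ⟨a, ha⟩ := Part.dom_iff_mem.1 this
          obtain ⟨k, hk⟩ := evaln_complete.1 ha
          exact ⟨k, Or.inl (by rw [hk]; rfl)⟩
        · have := gspec2 E hE x y hxE hy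
          obtain ⟨k, hk⟩ := evaln_complete.1 this
          exact ⟨k, Or.inr hk⟩
      obtain ⟨s, hs⟩ := exists_bound (fun p s t hst h => by
        rcases h with h | h
        · left
          obtain ⟨a, ha⟩ := Option.isSome_iff_exists.1 h
          have := evaln_mono hst (show a ∈ evaln s p.1 m from ha)
          rw [this]; rfl
        · right
          exact evaln_mono hst h) hQ
      have hpre : ∀ p ∈ P, evaln s p.1 m = none → evaln s p.2 m = some y := by
        intro p hp h1
        rcases hs p hp with h | h
        · rw [h1] at h; cases h
        · exact h
      rcases combineG_complete hpre with hG | hG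
      · exfalso
        have := combineG_none_iff.1 hG (g E₀) (memP' E₀ hE₀)
        rw [hE₀none s] at this
        simp at this
      · exact ⟨s, by unfold combineF; rw [hG]; rfl⟩
    obtain ⟨s, hs⟩ := claimB
    obtain ⟨u, hu⟩ := Option.isSome_iff_exists.1 hs
    have hd : (Nat.rfindOpt fun s => combineF P m s).Dom :=
      Nat.rfindOpt_dom.2 ⟨s, u, by rw [hu]; rfl⟩
    have hmem : (Nat.rfindOpt fun s => combineF P m s).get hd ∈
        Nat.rfindOpt fun s => combineF P m s := Part.get_mem hd
    obtain ⟨t, ht⟩ := Nat.rfindOpt_spec hmem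
    have hgy : (Nat.rfindOpt fun s => combineF P m s).get hd = y :=
      claimA t _ ht
    rw [← hgy]
    exact hmem
end

section
/- Let X and Y be topological spaces such that Y has an open set different from ∅ and from Y, and let C be the class of all continuous partial functions from X to Y. Let A be a finite collection of subsets of X. If A is strongly join permitting for C, then for each subcollection K of A there exists an open set H of X with ⋃K \ ⋃(A\K) ⊆ H and H ∩ (⋃(A\K) \ ⋃K) = ∅. -/
open Set

/-- A partial function between topological spaces is continuous if the preimage of
every open set is the intersection of the domain with an open set. -/
def ContinuousPFun {X Y : Type*} [TopologicalSpace X] [TopologicalSpace Y]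
    (f : X →. Y) : Prop :=
  ∀ V : Set Y, IsOpen V → ∃ O : Set X, IsOpen O ∧ f.preimage V = f.Dom ∩ O

/-- A partial function all of whose values equal a single constant is continuous. -/
lemma const_cont {X Y : Type*} [TopologicalSpace X] [TopologicalSpace Y]
    (g : X →. Y) (c : Y) (hg : ∀ x (h : (g x).Dom), (g x).get h = c) :
    ContinuousPFun g := by
  intro W hW
  by_cases hc : c ∈ W
  · refine ⟨Set.univ, isOpen_univ, ?_⟩
    ext x
    simp only [PFun.mem_preimage, Set.mem_inter_iff, Set.mem_univ, and_true,
      PFun.mem_dom]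
    constructor
    · rintro ⟨y, _, hy⟩; exact ⟨y, hy⟩
    · rintro ⟨y, hy⟩
      obtain ⟨h, rfl⟩ := hy
      exact ⟨_, hg x h ▸ hc, ⟨h, rfl⟩⟩
  · refine ⟨∅, isOpen_empty, ?_⟩
    ext x
    simp only [PFun.mem_preimage, Set.mem_inter_iff, Set.mem_empty_iff_false,
      and_false, iff_false]
    rintro ⟨y, hyW, ⟨h, rfl⟩⟩
    exact hc (hg x h ▸ hyW)

theorem stmt_9 {X Y : Type*} [TopologicalSpace X] [TopologicalSpace Y]
    (V : Set Y) (hV : IsOpen V) (hVne : V ≠ ∅) (hVuniv : V ≠ Set.univ)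
    (𝒜 : Set (Set X)) (hfin : 𝒜.Finite)
    (hsjp : SJP {f : X →. Y | ContinuousPFun f} 𝒜) :
    ∀ 𝒦 ⊆ 𝒜, ∃ H : Set X, IsOpen H ∧
      ⋃₀ 𝒦 \ ⋃₀ (𝒜 \ 𝒦) ⊆ H ∧ H ∩ (⋃₀ (𝒜 \ 𝒦) \ ⋃₀ 𝒦) = ∅ := by
  classical
  intro 𝒦 h𝒦
  obtain ⟨y, hy⟩ : ∃ y, y ∈ V := Set.nonempty_iff_ne_empty.mpr hVne
  obtain ⟨z, hz⟩ : ∃ z, z ∉ V := by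
    by_contra h
    push_neg at h
    exact hVuniv (Set.eq_univ_of_forall h)
  set S₁ : Set X := ⋃₀ 𝒦 \ ⋃₀ (𝒜 \ 𝒦) with hS₁
  set S₂ : Set X := ⋃₀ (𝒜 \ 𝒦) \ ⋃₀ 𝒦 with hS₂
  set f : X →. Y := fun x =>
    if x ∈ S₁ then Part.some y else if x ∈ S₂ then Part.some z else Part.none
    with hf
  have hdom : ∀ x, (f x).Dom ↔ (x ∈ S₁ ∨ x ∈ S₂) := by
    intro x
    simp only [hf]
    by_cases h1 : x ∈ S₁ <;> by_cases h2 : x ∈ S₂ <;>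
      simp [h1, h2, Part.some_dom]
  have hdomsub : f.Dom ⊆ ⋃₀ 𝒜 := by
    intro x hx
    rcases (hdom x).mp hx with h | h
    · exact Set.sUnion_mono h𝒦 h.1
    · exact Set.sUnion_mono (Set.diff_subset) h.1
  have hrest : ∀ A ∈ 𝒜, pRestrict f A ∈ {g : X →. Y | ContinuousPFun g} := by
    intro A hA
    by_cases hAK : A ∈ 𝒦
    · apply const_cont _ y
      intro x h
      have hx1 : x ∈ S₁ := by
        rcases (hdom x).mp h.2 with h' | h'
        · exact h'
        · exact absurd (Set.subset_sUnion_of_mem hAK h.1) h'.2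
      simp only [pRestrict, hf]
      simp [hx1]
    · apply const_cont _ z
      intro x h
      have hx1 : x ∉ S₁ := by
        intro h'
        exact h'.2 (Set.subset_sUnion_of_mem (Set.mem_diff_of_mem hA hAK) h.1)
      have hx2 : x ∈ S₂ := by
        rcases (hdom x).mp h.2 with h' | h'
        · exact absurd h' hx1
        · exact h'
      simp only [pRestrict, hf]
      simp [hx1, hx2]
  obtain ⟨O, hO, hpre⟩ := (hsjp f hdomsub hrest) V hV
  have hpreimage : f.preimage V = S₁ := by
    ext x
    simp only [PFun.mem_preimage]
    constructor
    · rintro ⟨v, hvV, hv⟩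
      rw [Part.mem_eq] at hv
      obtain ⟨h, rfl⟩ := hv
      by_contra hx1
      have hx2 : x ∈ S₂ := by
        rcases (hdom x).mp h with h' | h'
        · exact absurd h' hx1
        · exact h'
      have : (f x).get h = z := by simp only [hf]; simp [hx1, hx2]
      rw [this] at hvV
      exact hz hvV
    · intro hx1
      have hd : (f x).Dom := (hdom x).mpr (Or.inl hx1)
      refine ⟨(f x).get hd, ?_, ⟨hd, rfl⟩⟩
      have : (f x).get hd = y := by simp only [hf]; simp [hx1]
      rw [this]; exact hy
  refine ⟨O, hO, ?_, ?_⟩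
  · intro x hx
    have : x ∈ f.Dom ∩ O := hpre ▸ hpreimage ▸ hx
    exact this.2
  · ext x
    simp only [Set.mem_inter_iff, Set.mem_empty_iff_false, iff_false]
    rintro ⟨hxO, hx2⟩
    have hd : x ∈ f.Dom := (hdom x).mpr (Or.inr hx2)
    have : x ∈ f.preimage V := by rw [hpre]; exact ⟨hd, hxO⟩
    rw [hpreimage] at this
    exact hx2.2 this.1
end

section
/- Let U = {U_k} and V = {V_l} be sequences of sets and C the class of (U,V)-computable partial functions from ⋃_k U_k to ⋃_l V_l. Let A be a finite collection of subsets of ⋃_k U_k. If for each subcollection K of A some effective Û-union separates ⋃K \ ⋃(A\K) from ⋃(A\K) \ ⋃K, then A is strongly join permitting for C. -/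
open Set

/-- Canonical `m`-th finite set of naturals: `k ∈ D_m` iff the `k`-th binary digit of `m` is 1. -/
def Dfin (m : ℕ) : Set ℕ := {k | m.testBit k}

/-- `Û_m = ⋂_{k ∈ D_m} U_k`, with the empty intersection taken to be `⋃_k U_k`. -/
def hatU {α : Type*} (U : ℕ → Set α) (m : ℕ) : Set α :=
  (⋃ k, U k) ∩ ⋂ k ∈ Dfin m, U k

/-- `U⁻¹(x) = {k | x ∈ U_k}`. -/
def Uinv {α : Type*} (U : ℕ → Set α) (x : α) : Set ℕ := {k | x ∈ U k}

/-- An effective `Û`-union: `⋃_{m ∈ S} Û_m` for some recursively enumerable `S ⊆ ℕ`. -/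
def EffUnion {α : Type*} (U : ℕ → Set α) (H : Set α) : Prop :=
  ∃ S : Set ℕ, REPred (· ∈ S) ∧ H = ⋃ m ∈ S, hatU U m

/-- An element `y` is `V`-computable if `V⁻¹(y)` is recursively enumerable. -/
def VComputable {β : Type*} (V : ℕ → Set β) (y : β) : Prop :=
  REPred fun l => y ∈ V l

/-- `(U,V)`-computability of a partial function from `⋃_k U_k` to `⋃_l V_l`. -/
def UVComputable {α β : Type*} (U : ℕ → Set α) (V : ℕ → Set β) (f : α →. β) : Prop :=
  f.Dom ⊆ ⋃ k, U k ∧ (∀ x (h : (f x).Dom), (f x).get h ∈ ⋃ l, V l) ∧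
  ∃ W : Set (ℕ × ℕ), REPred (· ∈ W) ∧
    ∀ x (h : (f x).Dom) (l : ℕ),
      ((f x).get h ∈ V l ↔ ∃ m, (m, l) ∈ W ∧ Dfin m ⊆ Uinv U x)


open Nat.Partrec (Code)
open Nat.Partrec.Code

namespace SJPAux

variable {γ : Type*} [Primcodable γ]

theorem assert_unit_dom (p : Prop) : (Part.assert p fun _ => Part.some ()).Dom ↔ p :=
  ⟨fun h => h.fst, fun h => ⟨h, trivial⟩⟩

theorem rePred_of_dom {f : γ →. Unit} (hf : Partrec f) {p : γ → Prop}
    (h : ∀ a, (f a).Dom ↔ p a) : REPred p :=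
  hf.dom_re.of_eq h

theorem rePred_dom {p : γ → Prop} (hp : REPred p) (a : γ) :
    (Part.assert (p a) fun _ => Part.some ()).Dom ↔ p a := assert_unit_dom _

theorem rePred_and {p q : γ → Prop} (hp : REPred p) (hq : REPred q) :
    REPred fun a => p a ∧ q a := by
  have hg : Partrec₂ fun (a : γ) (_ : Unit) => Part.assert (q a) fun _ => Part.some () :=
    Partrec.comp hq (Computable.fst (α := γ) (β := Unit))
  have hb : Partrec fun a : γ =>
      (Part.assert (p a) fun _ => Part.some ()).bind
        (fun _ : Unit => Part.assert (q a) fun _ => Part.some ()) :=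
    Partrec.bind hp hg
  refine rePred_of_dom hb fun a => ?_
  simp only [Part.dom_iff_mem, Part.mem_bind_iff, Part.mem_assert_iff]
  constructor
  · rintro ⟨u, v, ⟨hpa, -⟩, ⟨hqa, -⟩⟩; exact ⟨hpa, hqa⟩
  · rintro ⟨hpa, hqa⟩; exact ⟨(), (), ⟨hpa, Part.mem_some _⟩, ⟨hqa, Part.mem_some _⟩⟩

theorem rePred_or {p q : γ → Prop} (hp : REPred p) (hq : REPred q) :
    REPred fun a => p a ∨ q a := by
  obtain ⟨k, hk, K⟩ := Partrec.merge' (hp : Partrec _) (hq : Partrec _)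
  exact rePred_of_dom hk fun a =>
    ((K a).2).trans (or_congr (assert_unit_dom _) (assert_unit_dom _))

theorem rePred_true : REPred fun _ : γ => True := by
  refine rePred_of_dom ((Computable.const ()).partrec) fun a => ?_
  simp

theorem rePred_false : REPred fun _ : γ => False := by
  refine rePred_of_dom (Partrec.none) fun a => ?_
  simp [Part.not_none_dom]

theorem rePred_comp {δ : Type*} [Primcodable δ] {p : δ → Prop} (hp : REPred p)
    {g : γ → δ} (hg : Computable g) : REPred fun a => p (g a) :=
  Partrec.comp hp hg

theorem rePred_exists {p : ℕ × γ → Prop} (hp : REPred p) :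
    REPred fun a => ∃ n, p (n, a) := by
  have hp' : Nat.Partrec fun n =>
      (Encodable.decode (α := ℕ × γ) n : Part (ℕ × γ)).bind fun x =>
        (Part.assert (p x) fun _ => Part.some ()).map Encodable.encode := hp
  obtain ⟨c, hc⟩ := exists_code.1 hp'
  have hdom : ∀ (n : ℕ) (a : γ), (eval c (Encodable.encode (n, a))).Dom ↔ p (n, a) := by
    intro n a
    rw [hc]
    simp only [Part.dom_iff_mem, Part.mem_bind_iff, Part.mem_map_iff, Part.mem_assert_iff,
      Encodable.encodek, Part.mem_coe, Option.mem_def, Option.some_inj]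
    constructor
    · rintro ⟨y, x, rfl, u, ⟨hx, -⟩, -⟩; exact hx
    · intro hx; exact ⟨_, _, rfl, (), ⟨hx, Part.mem_some _⟩, rfl⟩
  have h1 : Primrec fun x : γ × ℕ =>
      ((x.2.unpair.1, c), Encodable.encode (x.2.unpair.2, x.1)) :=
    ((Primrec.fst.comp (Primrec.unpair.comp Primrec.snd)).pair (Primrec.const c)).pair
      (Primrec.encode.comp ((Primrec.snd.comp (Primrec.unpair.comp Primrec.snd)).pair Primrec.fst))
  have h2 : Primrec fun x : γ × ℕ =>
      (evaln x.2.unpair.1 c (Encodable.encode (x.2.unpair.2, x.1))).map fun _ => () :=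
    Primrec.option_map (primrec_evaln.comp h1) (Primrec.const ()).to₂
  have hF : Partrec fun a : γ => Nat.rfindOpt fun k =>
      (evaln k.unpair.1 c (Encodable.encode (k.unpair.2, a))).map fun _ => () :=
    Partrec.rfindOpt (Computable₂.mk h2.to_comp)
  refine rePred_of_dom hF fun a => ?_
  rw [Nat.rfindOpt_dom]
  constructor
  · rintro ⟨k, u, hu⟩
    simp only [Option.mem_def, Option.map_eq_some_iff] at hu
    obtain ⟨z, hz, -⟩ := hu
    exact ⟨k.unpair.2, (hdom _ _).1 (Part.dom_iff_mem.2 ⟨z, evaln_sound hz⟩)⟩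
  · rintro ⟨n, hn⟩
    obtain ⟨z, hz⟩ := Part.dom_iff_mem.1 ((hdom n a).2 hn)
    obtain ⟨k, hk⟩ := evaln_complete.1 hz
    refine ⟨Nat.pair k n, (), ?_⟩
    simp only [Nat.unpair_pair, Option.mem_def, Option.map_eq_some_iff]
    exact ⟨z, hk, trivial⟩

theorem rePred_biUnion {ι : Type*} {T : Set ι} (hT : T.Finite) {p : ι → γ → Prop}
    (hp : ∀ i ∈ T, REPred (p i)) : REPred fun a => ∃ i ∈ T, p i a := by
  refine Set.Finite.induction_on
    (motive := fun T _ => (∀ i ∈ T, REPred (p i)) → REPred fun a => ∃ i ∈ T, p i a) _ hT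
    (fun _ => rePred_false.of_eq (by simp)) ?_ hp
  intro a s _ _ IH h
  have h1 : REPred (p a) := h a (Set.mem_insert _ _)
  have h2 := IH fun i hi => h i (Set.mem_insert_of_mem _ hi)
  refine (rePred_or h1 h2).of_eq fun x => ?_
  simp only [Set.mem_insert_iff]
  constructor
  · rintro (hx | ⟨i, hi, hx⟩)
    exacts [⟨a, Or.inl rfl, hx⟩, ⟨i, Or.inr hi, hx⟩]
  · rintro ⟨i, rfl | hi, hx⟩
    exacts [Or.inl hx, Or.inr ⟨i, hi, hx⟩]

theorem rePred_biInter {ι : Type*} {T : Set ι} (hT : T.Finite) {p : ι → γ → Prop}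
    (hp : ∀ i ∈ T, REPred (p i)) : REPred fun a => ∀ i ∈ T, p i a := by
  refine Set.Finite.induction_on
    (motive := fun T _ => (∀ i ∈ T, REPred (p i)) → REPred fun a => ∀ i ∈ T, p i a) _ hT
    (fun _ => rePred_true.of_eq (by simp)) ?_ hp
  intro a s _ _ IH h
  have h1 : REPred (p a) := h a (Set.mem_insert _ _)
  have h2 := IH fun i hi => h i (Set.mem_insert_of_mem _ hi)
  refine (rePred_and h1 h2).of_eq fun x => ?_
  constructor
  · rintro ⟨ha, hs⟩ i hi
    rcases Set.mem_insert_iff.1 hi with rfl | hi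
    exacts [ha, hs i hi]
  · intro h'
    exact ⟨h' a (Set.mem_insert _ _), fun i hi => h' i (Set.mem_insert_of_mem _ hi)⟩

theorem hpow2 : Primrec₂ ((· ^ ·) : ℕ → ℕ → ℕ) := Primrec₂.unpaired'.1 Nat.Primrec.pow

theorem htestBit : Primrec₂ Nat.testBit := by
  have h : Primrec fun p : ℕ × ℕ => decide (p.1 / 2 ^ p.2 % 2 = 1) :=
    Primrec.eq.decide.comp
      (Primrec.nat_mod.comp
        (Primrec.nat_div.comp Primrec.fst (hpow2.comp (Primrec.const 2) Primrec.snd))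
        (Primrec.const 2))
      (Primrec.const 1)
  exact h.of_eq fun p => (Nat.testBit_eq_decide_div_mod_eq).symm

def subB (a b : ℕ) : Bool :=
  (List.range (a + 1)).foldl (fun r k => r && (bif a.testBit k then b.testBit k else true)) true

theorem hsubB : Primrec₂ subB := by
  have hb : Primrec fun x : (ℕ × ℕ) × Bool × ℕ =>
      (bif x.1.1.testBit x.2.2 then x.1.2.testBit x.2.2 else true) :=
    Primrec.cond (htestBit.comp (Primrec.fst.comp Primrec.fst) (Primrec.snd.comp Primrec.snd))
      (htestBit.comp (Primrec.snd.comp Primrec.fst) (Primrec.snd.comp Primrec.snd))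
      (Primrec.const true)
  have hh : Primrec₂ fun (p : ℕ × ℕ) (q : Bool × ℕ) =>
      q.1 && (bif p.1.testBit q.2 then p.2.testBit q.2 else true) :=
    Primrec₂.mk <| (Primrec.cond (Primrec.fst.comp Primrec.snd) hb
      (Primrec.const false)).of_eq fun x => by cases h : x.2.1 <;> simp [h]
  have := Primrec.list_foldl (α := ℕ × ℕ) (β := ℕ) (σ := Bool)
    (Primrec.list_range.comp (Primrec.succ.comp Primrec.fst)) (Primrec.const true) hh
  exact this.of_eq fun p => rfl

theorem foldl_and (g : ℕ → Bool) : ∀ (l : List ℕ) (r : Bool),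
    l.foldl (fun s k => s && g k) r = (r && l.all g)
  | [], r => by simp
  | k :: l, r => by
    rw [List.foldl_cons, foldl_and g l, List.all_cons, ← Bool.and_assoc]

theorem subB_iff (a b : ℕ) : subB a b = true ↔ Dfin a ⊆ Dfin b := by
  have h1 : subB a b = (List.range (a + 1)).all
      (fun k => bif a.testBit k then b.testBit k else true) := by
    rw [subB, foldl_and, Bool.true_and]
  rw [h1, List.all_eq_true]
  constructor
  · intro h k hk
    have hk' : a.testBit k = true := hk
    have hlt : k < a + 1 := by
      by_contra hge
      have h2 : a < 2 ^ k :=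
        lt_of_lt_of_le (Nat.lt_of_lt_of_le (Nat.lt_succ_self a) (Nat.le_of_not_lt hge))
          (Nat.le_of_lt (Nat.lt_two_pow_self (n := k)))
      rw [Nat.testBit_lt_two_pow h2] at hk'
      exact Bool.false_ne_true hk'
    have := h k (List.mem_range.2 hlt)
    rw [hk'] at this
    exact this
  · intro h k _
    cases hc : a.testBit k
    · simp
    · simpa using (show b.testBit k = true from h (show k ∈ Dfin a from hc))

theorem rePred_subB : REPred fun p : ℕ × ℕ => Dfin p.1 ⊆ Dfin p.2 := by
  have hcomp : Computable fun p : ℕ × ℕ => decide (subB p.1 p.2 = true) :=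
    (Primrec₂.to_comp hsubB : Computable₂ subB).of_eq fun p => by simp
  have hc : ComputablePred fun p : ℕ × ℕ => subB p.1 p.2 = true := ⟨inferInstance, hcomp⟩
  exact (hc.of_eq fun p => subB_iff _ _).to_re

theorem Dfin_or (a b : ℕ) : Dfin (a ||| b) = Dfin a ∪ Dfin b := by
  ext k
  simp [Dfin, Nat.testBit_or]

theorem mem_hatU {α : Type*} {U : ℕ → Set α} {m : ℕ} {x : α} :
    x ∈ hatU U m ↔ x ∈ (⋃ k, U k) ∧ Dfin m ⊆ Uinv U x := by
  simp only [hatU, Set.mem_inter_iff, Set.mem_iInter]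
  exact and_congr Iff.rfl ⟨fun h k hk => h k hk, fun h k hk => h hk⟩

theorem cover_lemma {γ' : Type*} {T : Set γ'} (hT : T.Finite) (X : Set ℕ) (g : γ' → ℕ → Prop)
    (hg : ∀ A ∈ T, ∃ m, Dfin m ⊆ X ∧ g A m) (m₀ : ℕ) (hm₀ : Dfin m₀ ⊆ X) :
    ∃ M, Dfin M ⊆ X ∧ Dfin m₀ ⊆ Dfin M ∧ ∀ A ∈ T, ∃ m, Dfin m ⊆ Dfin M ∧ g A m := by
  refine Set.Finite.induction_on
    (motive := fun T _ => (∀ A ∈ T, ∃ m, Dfin m ⊆ X ∧ g A m) → ∀ m₀, Dfin m₀ ⊆ X →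
      ∃ M, Dfin M ⊆ X ∧ Dfin m₀ ⊆ Dfin M ∧ ∀ A ∈ T, ∃ m, Dfin m ⊆ Dfin M ∧ g A m)
    _ hT ?_ ?_ hg m₀ hm₀
  · intro _ m₀ hm₀
    exact ⟨m₀, hm₀, subset_rfl, fun A hA => absurd hA (Set.notMem_empty A)⟩
  · intro a s _ _ IH hg' m₀ hm₀
    obtain ⟨ma, hmaX, hga⟩ := hg' a (Set.mem_insert _ _)
    obtain ⟨M, hMX, hsubM, hM⟩ := IH (fun A hA => hg' A (Set.mem_insert_of_mem _ hA)) (m₀ ||| ma)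
      (by rw [Dfin_or]; exact Set.union_subset hm₀ hmaX)
    rw [Dfin_or] at hsubM
    refine ⟨M, hMX, (Set.subset_union_left).trans hsubM, ?_⟩
    intro A hA
    rcases Set.mem_insert_iff.1 hA with rfl | hA
    · exact ⟨ma, (Set.subset_union_right).trans hsubM, hga⟩
    · exact hM A hA

end SJPAux

set_option maxHeartbeats 1000000 in
open SJPAux in
theorem stmt_15 {α β : Type*} (U : ℕ → Set α) (V : ℕ → Set β)
    (𝒜 : Set (Set α)) (hfin : 𝒜.Finite) (hsub : ∀ A ∈ 𝒜, A ⊆ ⋃ k, U k)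
    (hsep : ∀ 𝒦 ⊆ 𝒜, ∃ H : Set α, EffUnion U H ∧
      ⋃₀ 𝒦 \ ⋃₀ (𝒜 \ 𝒦) ⊆ H ∧ H ∩ (⋃₀ (𝒜 \ 𝒦) \ ⋃₀ 𝒦) = ∅) :
    SJP {f : α →. β | UVComputable U V f} 𝒜 := by
  classical
  intro f hdom hC
  simp only [Set.mem_setOf_eq] at hC ⊢
  have hWex : ∀ A : Set α, ∃ WA : Set (ℕ × ℕ), A ∈ 𝒜 →
      REPred (· ∈ WA) ∧ ∀ x (h : (pRestrict f A x).Dom) (l : ℕ),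
        ((pRestrict f A x).get h ∈ V l ↔ ∃ m, (m, l) ∈ WA ∧ Dfin m ⊆ Uinv U x) := by
    intro A
    by_cases hA : A ∈ 𝒜
    · obtain ⟨-, -, WA, h1, h2⟩ := hC A hA
      exact ⟨WA, fun _ => ⟨h1, h2⟩⟩
    · exact ⟨∅, fun h => absurd h hA⟩
  choose W hW using hWex
  have hSex : ∀ 𝒦 : Set (Set α), ∃ S : Set ℕ, 𝒦 ⊆ 𝒜 →
      REPred (· ∈ S) ∧ (⋃₀ 𝒦 \ ⋃₀ (𝒜 \ 𝒦) ⊆ ⋃ m ∈ S, hatU U m) ∧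
        ((⋃ m ∈ S, hatU U m) ∩ (⋃₀ (𝒜 \ 𝒦) \ ⋃₀ 𝒦) = ∅) := by
    intro 𝒦
    by_cases h𝒦 : 𝒦 ⊆ 𝒜
    · obtain ⟨H, ⟨S, hSre, rfl⟩, h1, h2⟩ := hsep 𝒦 h𝒦
      exact ⟨S, fun _ => ⟨hSre, h1, h2⟩⟩
    · exact ⟨∅, fun h => absurd h h𝒦⟩
  choose S hS using hSex
  have hdomU : f.Dom ⊆ ⋃ k, U k := by
    intro x hx
    obtain ⟨A, hA, hxA⟩ := hdom hx
    exact hsub A hA hxA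
  have hval : ∀ x (h : (f x).Dom), (f x).get h ∈ ⋃ l, V l := by
    intro x h
    obtain ⟨A, hA, hxA⟩ := hdom (show x ∈ f.Dom from h)
    exact (hC A hA).2.1 x ⟨hxA, h⟩
  set WW : Set (ℕ × ℕ) := {ml | ∃ 𝒦 ∈ {𝒦 : Set (Set α) | 𝒦 ⊆ 𝒜},
      (∃ m₀, Dfin m₀ ⊆ Dfin ml.1 ∧ m₀ ∈ S 𝒦) ∧
      ∀ A ∈ 𝒦, ∃ m', Dfin m' ⊆ Dfin ml.1 ∧ (m', ml.2) ∈ W A} with hWWdef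
  refine ⟨hdomU, hval, WW, ?_, ?_⟩
  · -- REPred of the constructed W
    show REPred fun ml : ℕ × ℕ => ∃ 𝒦 ∈ {𝒦 : Set (Set α) | 𝒦 ⊆ 𝒜},
      (∃ m₀, Dfin m₀ ⊆ Dfin ml.1 ∧ m₀ ∈ S 𝒦) ∧
      ∀ A ∈ 𝒦, ∃ m', Dfin m' ⊆ Dfin ml.1 ∧ (m', ml.2) ∈ W A
    refine rePred_biUnion (p := fun (𝒦 : Set (Set α)) (ml : ℕ × ℕ) =>
      (∃ m₀, Dfin m₀ ⊆ Dfin ml.1 ∧ m₀ ∈ S 𝒦) ∧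
      ∀ A ∈ 𝒦, ∃ m', Dfin m' ⊆ Dfin ml.1 ∧ (m', ml.2) ∈ W A) hfin.finite_subsets ?_
    intro 𝒦 h𝒦
    refine rePred_and ?_ ?_
    · refine rePred_exists (p := fun q : ℕ × (ℕ × ℕ) =>
        Dfin q.1 ⊆ Dfin q.2.1 ∧ q.1 ∈ S 𝒦) ?_
      refine rePred_and ?_ ?_
      · exact rePred_comp (g := fun q : ℕ × (ℕ × ℕ) => (q.1, q.2.1)) rePred_subB
          (Computable.fst.pair (Computable.fst.comp Computable.snd))
      · exact rePred_comp (g := fun q : ℕ × (ℕ × ℕ) => q.1) ((hS 𝒦 h𝒦).1) Computable.fst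
    · refine rePred_biInter (hfin.subset h𝒦) ?_
      intro A hA
      refine rePred_exists (p := fun q : ℕ × (ℕ × ℕ) =>
        Dfin q.1 ⊆ Dfin q.2.1 ∧ (q.1, q.2.2) ∈ W A) ?_
      refine rePred_and ?_ ?_
      · exact rePred_comp (g := fun q : ℕ × (ℕ × ℕ) => (q.1, q.2.1)) rePred_subB
          (Computable.fst.pair (Computable.fst.comp Computable.snd))
      · exact rePred_comp (g := fun q : ℕ × (ℕ × ℕ) => (q.1, q.2.2)) ((hW A (h𝒦 hA)).1)
          (Computable.fst.pair (Computable.snd.comp Computable.snd))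
  · -- the specification
    intro x h l
    obtain ⟨A₀, hA₀, hxA₀⟩ := hdom (show x ∈ f.Dom from h)
    constructor
    · intro hv
      set 𝒦x : Set (Set α) := {A ∈ 𝒜 | x ∈ A} with h𝒦x
      have h𝒦sub : 𝒦x ⊆ 𝒜 := fun A hA => hA.1
      obtain ⟨hSre, hS1, hS2⟩ := hS 𝒦x h𝒦sub
      have hx1 : x ∈ ⋃₀ 𝒦x := ⟨A₀, ⟨hA₀, hxA₀⟩, hxA₀⟩
      have hx2 : x ∉ ⋃₀ (𝒜 \ 𝒦x) := by
        rintro ⟨B, ⟨hB𝒜, hB⟩, hxB⟩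
        exact hB ⟨hB𝒜, hxB⟩
      obtain ⟨m₀, hm₀S, hm₀U⟩ : ∃ m₀ ∈ S 𝒦x, x ∈ hatU U m₀ := by
        have := hS1 ⟨hx1, hx2⟩
        simpa using this
      have hm₀ : Dfin m₀ ⊆ Uinv U x := (mem_hatU.1 hm₀U).2
      have hAs : ∀ A ∈ 𝒦x, ∃ m, Dfin m ⊆ Uinv U x ∧ (m, l) ∈ W A := by
        intro A hA
        have hd : (pRestrict f A x).Dom := ⟨hA.2, h⟩
        obtain ⟨m, hmW, hmU⟩ := ((hW A hA.1).2 x hd l).1 hv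
        exact ⟨m, hmU, hmW⟩
      obtain ⟨M, hMU, hm₀M, hMA⟩ :=
        cover_lemma (hfin.subset h𝒦sub) (Uinv U x) (fun A m => (m, l) ∈ W A) hAs m₀ hm₀
      exact ⟨M, ⟨𝒦x, h𝒦sub, ⟨m₀, hm₀M, hm₀S⟩, hMA⟩, hMU⟩
    · rintro ⟨M, ⟨𝒦, h𝒦sub, ⟨m₀, hm₀M, hm₀S⟩, hall⟩, hMU⟩
      obtain ⟨hSre, hS1, hS2⟩ := hS 𝒦 h𝒦sub
      have hxhat : x ∈ hatU U m₀ :=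
        mem_hatU.2 ⟨hsub A₀ hA₀ hxA₀, hm₀M.trans hMU⟩
      have hxH : x ∈ ⋃ m ∈ S 𝒦, hatU U m := Set.mem_biUnion hm₀S hxhat
      have hx𝒦 : x ∈ ⋃₀ 𝒦 := by
        by_contra hx
        have hmem : x ∈ (⋃ m ∈ S 𝒦, hatU U m) ∩ (⋃₀ (𝒜 \ 𝒦) \ ⋃₀ 𝒦) :=
          ⟨hxH, ⟨A₀, ⟨hA₀, fun hA₀𝒦 => hx ⟨A₀, hA₀𝒦, hxA₀⟩⟩, hxA₀⟩, hx⟩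
        rw [hS2] at hmem
        exact hmem
      obtain ⟨B, hB𝒦, hxB⟩ := hx𝒦
      obtain ⟨m', hm'M, hm'W⟩ := hall B hB𝒦
      have hd : (pRestrict f B x).Dom := ⟨hxB, h⟩
      exact ((hW B (h𝒦sub hB𝒦)).2 x hd l).2 ⟨m', hm'W, hm'M.trans hMU⟩
end

section
/- Let U = {U_k} and V = {V_l} be sequences of sets and C the class of (U,V)-computable partial functions from ⋃_k U_k to ⋃_l V_l. Suppose there exist l1, l2 ∈ ℕ and V-computable elements c1 ∈ V_{l1} and c2 ∈ V_{l2} \ V_{l1}. Let A be a finite collection of subsets of ⋃_k U_k. If A is strongly join permitting for C, then for each subcollection K of A there exists an effective Û-union H with ⋃K \ ⋃(A\K) ⊆ H and H ∩ (⋃(A\K) \ ⋃K) = ∅. -/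
open Set

lemma const_UV {α β : Type*} (U : ℕ → Set α) (V : ℕ → Set β) (g : α →. β) (c : β)
    (l : ℕ) (hc : c ∈ V l) (hcomp : VComputable V c)
    (hdom : g.Dom ⊆ ⋃ k, U k)
    (hval : ∀ x (h : (g x).Dom), (g x).get h = c) :
    UVComputable U V g := by
  refine ⟨hdom, fun x h => ?_, {p : ℕ × ℕ | c ∈ V p.2}, ?_, fun x h l' => ?_⟩
  · rw [hval x h]; exact Set.mem_iUnion.2 ⟨l, hc⟩
  · exact Partrec.comp hcomp Computable.snd
  · rw [hval x h]
    constructor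
    · intro hl
      refine ⟨0, hl, ?_⟩
      intro k hk
      simp [Dfin, Nat.zero_testBit] at hk
    · rintro ⟨m, hm, -⟩; exact hm

theorem stmt_16 {α β : Type*} (U : ℕ → Set α) (V : ℕ → Set β)
    (l₁ l₂ : ℕ) (c₁ c₂ : β) (hc₁ : c₁ ∈ V l₁) (hc₂ : c₂ ∈ V l₂ \ V l₁)
    (hcomp₁ : VComputable V c₁) (hcomp₂ : VComputable V c₂)
    (𝒜 : Set (Set α)) (hfin : 𝒜.Finite) (hsub : ∀ A ∈ 𝒜, A ⊆ ⋃ k, U k)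
    (hsjp : SJP {f : α →. β | UVComputable U V f} 𝒜) :
    ∀ 𝒦 ⊆ 𝒜, ∃ H : Set α, EffUnion U H ∧
      ⋃₀ 𝒦 \ ⋃₀ (𝒜 \ 𝒦) ⊆ H ∧ H ∩ (⋃₀ (𝒜 \ 𝒦) \ ⋃₀ 𝒦) = ∅ := by
  intro 𝒦 h𝒦
  classical
  set f : α →. β := fun x =>
    ⟨x ∈ (⋃₀ 𝒦 \ ⋃₀ (𝒜 \ 𝒦)) ∪ (⋃₀ (𝒜 \ 𝒦) \ ⋃₀ 𝒦),
      fun _ => if x ∈ ⋃₀ 𝒦 then c₁ else c₂⟩ with hf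
  have hfdomc : ∀ x, (f x).Dom ↔
      x ∈ (⋃₀ 𝒦 \ ⋃₀ (𝒜 \ 𝒦)) ∪ (⋃₀ (𝒜 \ 𝒦) \ ⋃₀ 𝒦) := fun x => Iff.rfl
  have hfget : ∀ x (h : (f x).Dom), (f x).get h = if x ∈ ⋃₀ 𝒦 then c₁ else c₂ :=
    fun x h => rfl
  have hfC : UVComputable U V f := by
    apply hsjp
    · intro x hx
      rcases (hfdomc x).1 hx with hx' | hx'
      · obtain ⟨A, hA, hxA⟩ := hx'.1
        exact ⟨A, h𝒦 hA, hxA⟩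
      · obtain ⟨A, hA, hxA⟩ := hx'.1
        exact ⟨A, hA.1, hxA⟩
    · intro A hA
      by_cases hAK : A ∈ 𝒦
      · apply const_UV U V _ c₁ l₁ hc₁ hcomp₁
        · rintro x ⟨hxA, -⟩
          exact hsub A hA hxA
        · rintro x h
          have hx𝒦 : x ∈ ⋃₀ 𝒦 := ⟨A, hAK, h.1⟩
          show (f x).get h.2 = c₁
          rw [hfget x h.2, if_pos hx𝒦]
      · apply const_UV U V _ c₂ l₂ hc₂.1 hcomp₂
        · rintro x ⟨hxA, -⟩
          exact hsub A hA hxA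
        · rintro x h
          have hx : x ∉ ⋃₀ 𝒦 := by
            have hxAK : x ∈ ⋃₀ (𝒜 \ 𝒦) := ⟨A, ⟨hA, hAK⟩, h.1⟩
            rcases (hfdomc x).1 h.2 with h' | h'
            · exact absurd hxAK h'.2
            · exact h'.2
          show (f x).get h.2 = c₂
          rw [hfget x h.2, if_neg hx]
  obtain ⟨hdom, hval, W, hWre, hWiff⟩ := hfC
  refine ⟨(⋃ m ∈ {m | (m, l₁) ∈ W}, hatU U m), ⟨{m | (m, l₁) ∈ W}, ?_, rfl⟩, ?_, ?_⟩
  · exact Partrec.comp hWre (Computable.pair Computable.id (Computable.const l₁))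
  · intro x hx
    have h : (f x).Dom := (hfdomc x).2 (Or.inl hx)
    have hget : (f x).get h = c₁ := by rw [hfget x h, if_pos hx.1]
    obtain ⟨m, hmW, hm⟩ := (hWiff x h l₁).1 (by rw [hget]; exact hc₁)
    refine Set.mem_biUnion hmW ⟨?_, ?_⟩
    · obtain ⟨A, hA, hxA⟩ := hx.1
      exact hsub A (h𝒦 hA) hxA
    · exact Set.mem_biInter fun k hk => hm hk
  · rw [Set.eq_empty_iff_forall_notMem]
    rintro x ⟨hxH, hxR⟩
    obtain ⟨m, hmS, hxm⟩ := Set.mem_iUnion₂.1 hxH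
    have h : (f x).Dom := (hfdomc x).2 (Or.inr hxR)
    have hget : (f x).get h = c₂ := by rw [hfget x h, if_neg hxR.2]
    have hDm : Dfin m ⊆ Uinv U x := fun k hk => Set.mem_iInter₂.1 hxm.2 k hk
    have hmem : (f x).get h ∈ V l₁ := (hWiff x h l₁).2 ⟨m, hmS, hDm⟩
    rw [hget] at hmem
    exact hc₂.2 hmem
end

section
/- Any finite collection of effective Û-unions is strongly join permitting for the class of (U,V)-computable partial functions from ⋃_k U_k to ⋃_l V_l (assuming there exist V-computable elements c1 ∈ V_{l1} and c2 ∈ V_{l2} \ V_{l1} is not needed for this direction). Specifically, for each subcollection K of such a collection A, ⋃K is itself an effective Û-union separating ⋃K \ ⋃(A\K) from ⋃(A\K) \ ⋃K. -/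
open Set

section REHelpers
open Encodable Nat.Partrec.Code

theorem re_false' {α} [Primcodable α] : REPred fun _ : α => False :=
  Partrec.none.of_eq fun _ => (Part.assert_neg not_false).symm

theorem re_comp' {α β} [Primcodable α] [Primcodable β] {p : β → Prop} (hp : REPred p)
    {g : α → β} (hg : Computable g) : REPred fun a => p (g a) :=
  hp.comp hg

theorem re_and' {α} [Primcodable α] {p q : α → Prop} (hp : REPred p) (hq : REPred q) :
    REPred fun a => p a ∧ q a := by
  have h : Partrec fun a => (Part.assert (p a) fun _ => Part.some ()).bind
      fun _ => Part.assert (q a) fun _ => Part.some () :=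
    hp.bind ((hq.comp Computable.fst).to₂ :
      Partrec₂ fun a (_ : Unit) => Part.assert (q a) fun _ => Part.some ())
  exact h.dom_re.of_eq fun a => by simp [Part.assert]

theorem re_or' {α} [Primcodable α] {p q : α → Prop} (hp : REPred p) (hq : REPred q) :
    REPred fun a => p a ∨ q a := by
  obtain ⟨k, pk, hk⟩ := Partrec.merge' hp hq
  exact pk.dom_re.of_eq fun a => by rw [(hk a).2]; simp [Part.assert]

theorem re_exists' {α} [Primcodable α] {q : α → ℕ → Prop}
    (hq : REPred fun p : α × ℕ => q p.1 p.2) : REPred fun a => ∃ n, q a n := by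
  have hq' : Nat.Partrec fun n => Part.bind (decode (α := α × ℕ) n)
      fun p : α × ℕ => (Part.assert (q p.1 p.2) fun _ => Part.some ()).map encode := hq
  obtain ⟨c, hc⟩ := exists_code.1 hq'
  have hF : Computable₂ fun (a : α) (k : ℕ) =>
      ((evaln k.unpair.2 c (encode (a, k.unpair.1))).map fun _ => ()) := by
    have h1 : Primrec fun r : α × ℕ => ((r.2.unpair.2, c), encode (r.1, r.2.unpair.1)) :=
      ((Primrec.snd.comp (Primrec.unpair.comp Primrec.snd)).pair (Primrec.const c)).pair
        (Primrec.encode.comp (Primrec.fst.pair (Primrec.fst.comp (Primrec.unpair.comp Primrec.snd))))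
    exact ((Primrec.option_map (primrec_evaln.comp h1) (Primrec.const ()).to₂).to_comp).to₂
  have hdom := (Partrec.rfindOpt hF).dom_re
  apply hdom.of_eq
  intro a
  rw [Nat.rfindOpt_dom]
  constructor
  · rintro ⟨k, u, hu⟩
    simp only [Option.mem_map] at hu
    obtain ⟨v, hv, -⟩ := hu
    have : v ∈ eval c (encode (a, k.unpair.1)) := evaln_complete.2 ⟨_, hv⟩
    rw [hc] at this
    simp [encodek] at this
    exact ⟨_, this.1⟩
  · rintro ⟨n, hn⟩
    have : encode () ∈ eval c (encode (a, n)) := by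
      rw [hc]; simp [encodek]
      exact ⟨hn, (), rfl⟩
    obtain ⟨s, hs⟩ := evaln_complete.1 this
    refine ⟨Nat.pair n s, (), ?_⟩
    simp [Nat.unpair_pair]
    exact ⟨_, hs⟩

end REHelpers

section Dsub

def dsub (j m : ℕ) : Bool :=
  (List.range j).foldr (fun k b => b && (!(j.testBit k) || m.testBit k)) true

theorem foldr_and_iff (f : ℕ → Bool) (l : List ℕ) :
    (l.foldr (fun k b => b && f k) true = true) ↔ ∀ k ∈ l, f k = true := by
  induction l with
  | nil => simp
  | cons a l ih => simp [Bool.and_eq_true, ih]; tauto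

theorem dsub_iff (j m : ℕ) : dsub j m = true ↔ Dfin j ⊆ Dfin m := by
  rw [dsub, foldr_and_iff]
  constructor
  · intro h k hk
    by_cases hkj : k < j
    · have := h k (List.mem_range.2 hkj)
      simp only [Bool.or_eq_true, Bool.not_eq_true'] at this
      rcases this with h' | h'
      · exact absurd hk (by simp [Dfin, h'])
      · exact h'
    · exfalso
      have : j.testBit k = false :=
        Nat.testBit_eq_false_of_lt (lt_of_le_of_lt (Nat.le_of_not_lt hkj) (Nat.lt_two_pow_self (n := k)))
      exact absurd hk (by simp [Dfin, this])
  · intro h k _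
    simp only [Bool.or_eq_true, Bool.not_eq_true']
    by_cases hb : j.testBit k
    · exact Or.inr (h hb)
    · exact Or.inl (by simpa using hb)

theorem primrec_pow : Primrec₂ ((· ^ ·) : ℕ → ℕ → ℕ) :=
  Primrec₂.unpaired'.1 Nat.Primrec.pow

theorem primrec_testBit : Primrec₂ Nat.testBit := by
  have h : Primrec fun p : ℕ × ℕ => decide (p.1 / 2 ^ p.2 % 2 = 1) :=
    PrimrecPred.decide <| PrimrecRel.comp Primrec.eq
      (Primrec.nat_mod.comp
        (Primrec.nat_div.comp Primrec.fst (primrec_pow.comp (Primrec.const 2) Primrec.snd))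
        (Primrec.const 2))
      (Primrec.const 1)
  exact (Primrec₂.of_eq h.to₂ fun m n => (Nat.testBit_eq_decide_div_mod_eq).symm)

theorem primrec_dsub : Primrec₂ dsub := by
  have := Primrec.list_foldr (α := ℕ × ℕ) (β := ℕ) (σ := Bool)
    (f := fun p => List.range p.1) (g := fun _ => true)
    (h := fun p q => q.2 && (!(p.1.testBit q.1) || p.2.testBit q.1))
    (Primrec.list_range.comp Primrec.fst) (Primrec.const true)
    (Primrec₂.comp (Primrec.dom_bool₂ (· && ·)) (Primrec.snd.comp Primrec.snd)
      (Primrec₂.comp (Primrec.dom_bool₂ (· || ·))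
        ((Primrec.dom_bool (!·)).comp
          (primrec_testBit.comp (Primrec.fst.comp Primrec.fst) (Primrec.fst.comp Primrec.snd)))
        (primrec_testBit.comp (Primrec.snd.comp Primrec.fst) (Primrec.fst.comp Primrec.snd))))
  exact this.to₂

theorem re_dsub_pair : REPred fun r : (ℕ × ℕ) × ℕ =>
    dsub r.2.unpair.1 r.1.1 = true ∧ dsub r.2.unpair.2 r.1.1 = true := by
  apply ComputablePred.to_re
  apply ComputablePred.computable_iff.2
  refine ⟨fun r : (ℕ × ℕ) × ℕ => dsub r.2.unpair.1 r.1.1 && dsub r.2.unpair.2 r.1.1, ?_, ?_⟩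
  · exact (Primrec₂.comp (Primrec.dom_bool₂ (· && ·))
      (primrec_dsub.comp (Primrec.fst.comp (Primrec.unpair.comp Primrec.snd))
        (Primrec.fst.comp Primrec.fst))
      (primrec_dsub.comp (Primrec.snd.comp (Primrec.unpair.comp Primrec.snd))
        (Primrec.fst.comp Primrec.fst))).to_comp
  · funext r
    simp [Bool.and_eq_true]

end Dsub

theorem mem_hatU_iff {α : Type*} (U : ℕ → Set α) (m : ℕ) (x : α) :
    x ∈ hatU U m ↔ x ∈ ⋃ k, U k ∧ Dfin m ⊆ Uinv U x := by
  simp only [hatU, Set.mem_inter_iff, Set.mem_iInter]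
  constructor
  · rintro ⟨h1, h2⟩
    exact ⟨h1, fun k hk => h2 k hk⟩
  · rintro ⟨h1, h2⟩
    exact ⟨h1, fun k hk => h2 hk⟩

theorem effUnion_subset {α : Type*} {U : ℕ → Set α} {A : Set α} (h : EffUnion U A) :
    A ⊆ ⋃ k, U k := by
  obtain ⟨S, -, rfl⟩ := h
  exact Set.iUnion₂_subset fun m _ => Set.inter_subset_left

theorem effUnion_empty {α : Type*} (U : ℕ → Set α) : EffUnion U ∅ :=
  ⟨∅, re_false', by simp⟩

theorem effUnion_union {α : Type*} {U : ℕ → Set α} {A B : Set α}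
    (hA : EffUnion U A) (hB : EffUnion U B) : EffUnion U (A ∪ B) := by
  obtain ⟨S, hS, rfl⟩ := hA
  obtain ⟨T, hT, rfl⟩ := hB
  refine ⟨S ∪ T, re_or' hS hT, ?_⟩
  rw [Set.biUnion_union]

theorem effUnion_sUnion {α : Type*} {U : ℕ → Set α} {𝒦 : Set (Set α)} (hfin : 𝒦.Finite)
    (heff : ∀ A ∈ 𝒦, EffUnion U A) : EffUnion U (⋃₀ 𝒦) := by
  refine Set.Finite.induction_on
    (motive := fun t _ => (∀ A ∈ t, EffUnion U A) → EffUnion U (⋃₀ t)) _ hfin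
    (fun _ => by simpa using effUnion_empty U) ?_ heff
  intro a s _ _ ih h
  rw [Set.sUnion_insert]
  exact effUnion_union (h a (Set.mem_insert _ _)) (ih fun A hA => h A (Set.mem_insert_of_mem _ hA))

theorem pRestrict_pRestrict {α β : Type*} (f : α →. β) {A B : Set α} (h : A ⊆ B) :
    pRestrict (pRestrict f B) A = pRestrict f A := by
  funext x
  apply Part.ext'
  · show (x ∈ A ∧ x ∈ B ∧ (f x).Dom) ↔ (x ∈ A ∧ (f x).Dom)
    exact ⟨fun ⟨h1, _, h3⟩ => ⟨h1, h3⟩, fun ⟨h1, h2⟩ => ⟨h1, h h1, h2⟩⟩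
  · intro h1 h2
    rfl

theorem combine {α β : Type*} (U : ℕ → Set α) (V : ℕ → Set β) {A B : Set α}
    (hA : EffUnion U A) (hB : EffUnion U B) (f : α →. β) (hdom : f.Dom ⊆ A ∪ B)
    (hfA : UVComputable U V (pRestrict f A)) (hfB : UVComputable U V (pRestrict f B)) :
    UVComputable U V f := by
  obtain ⟨SA, hSA, hAeq⟩ := hA
  obtain ⟨SB, hSB, hBeq⟩ := hB
  obtain ⟨-, hvalA, WA, hWA, hWAp⟩ := hfA
  obtain ⟨-, hvalB, WB, hWB, hWBp⟩ := hfB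
  have hAU : A ⊆ ⋃ k, U k := effUnion_subset ⟨SA, hSA, hAeq⟩
  have hBU : B ⊆ ⋃ k, U k := effUnion_subset ⟨SB, hSB, hBeq⟩
  refine ⟨fun x hx => ?_, fun x h => ?_, ?_⟩
  · rcases hdom hx with h | h
    · exact hAU h
    · exact hBU h
  · rcases hdom h with hx | hx
    · exact hvalA x ⟨hx, h⟩
    · exact hvalB x ⟨hx, h⟩
  · refine ⟨{p : ℕ × ℕ |
      (∃ n : ℕ, n.unpair.1 ∈ SA ∧ (n.unpair.2, p.2) ∈ WA ∧
        dsub n.unpair.1 p.1 = true ∧ dsub n.unpair.2 p.1 = true) ∨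
      (∃ n : ℕ, n.unpair.1 ∈ SB ∧ (n.unpair.2, p.2) ∈ WB ∧
        dsub n.unpair.1 p.1 = true ∧ dsub n.unpair.2 p.1 = true)}, ?_, ?_⟩
    · apply re_or'
      · apply re_exists'
        apply re_and'
        · exact re_comp' hSA ((Primrec.fst.comp (Primrec.unpair.comp Primrec.snd)).to_comp)
        apply re_and'
        · exact re_comp' hWA (((Primrec.snd.comp (Primrec.unpair.comp Primrec.snd)).pair
            (Primrec.snd.comp Primrec.fst)).to_comp)
        · exact re_dsub_pair
      · apply re_exists'
        apply re_and'
        · exact re_comp' hSB ((Primrec.fst.comp (Primrec.unpair.comp Primrec.snd)).to_comp)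
        apply re_and'
        · exact re_comp' hWB (((Primrec.snd.comp (Primrec.unpair.comp Primrec.snd)).pair
            (Primrec.snd.comp Primrec.fst)).to_comp)
        · exact re_dsub_pair
    · intro x h l
      have hDor : ∀ m m' : ℕ, Dfin (m ||| m') = Dfin m ∪ Dfin m' := by
        intro m m'
        ext k
        simp [Dfin, Nat.testBit_or]
      constructor
      · intro hV
        rcases hdom h with hx | hx
        · have hx' := hx
          rw [hAeq] at hx'
          obtain ⟨m0, hm0S, hm0⟩ := Set.mem_iUnion₂.1 hx'
          have hD0 : Dfin m0 ⊆ Uinv U x := ((mem_hatU_iff U m0 x).1 hm0).2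
          have hres : ((pRestrict f A x).get ⟨hx, h⟩ ∈ V l) := hV
          obtain ⟨m', hm'W, hm'D⟩ := (hWAp x ⟨hx, h⟩ l).1 hres
          refine ⟨m0 ||| m', Or.inl ⟨Nat.pair m0 m', ?_⟩, ?_⟩
          · simp only [Nat.unpair_pair]
            exact ⟨hm0S, hm'W, (dsub_iff _ _).2 (by rw [hDor]; exact Set.subset_union_left),
              (dsub_iff _ _).2 (by rw [hDor]; exact Set.subset_union_right)⟩
          · rw [hDor]; exact Set.union_subset hD0 hm'D
        · have hx' := hx
          rw [hBeq] at hx'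
          obtain ⟨m0, hm0S, hm0⟩ := Set.mem_iUnion₂.1 hx'
          have hD0 : Dfin m0 ⊆ Uinv U x := ((mem_hatU_iff U m0 x).1 hm0).2
          have hres : ((pRestrict f B x).get ⟨hx, h⟩ ∈ V l) := hV
          obtain ⟨m', hm'W, hm'D⟩ := (hWBp x ⟨hx, h⟩ l).1 hres
          refine ⟨m0 ||| m', Or.inr ⟨Nat.pair m0 m', ?_⟩, ?_⟩
          · simp only [Nat.unpair_pair]
            exact ⟨hm0S, hm'W, (dsub_iff _ _).2 (by rw [hDor]; exact Set.subset_union_left),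
              (dsub_iff _ _).2 (by rw [hDor]; exact Set.subset_union_right)⟩
          · rw [hDor]; exact Set.union_subset hD0 hm'D
      · rintro ⟨m, hmW | hmW, hmD⟩
        · obtain ⟨n, hnS, hnW, hd1, hd2⟩ := hmW
          have hD1 : Dfin n.unpair.1 ⊆ Uinv U x := ((dsub_iff _ _).1 hd1).trans hmD
          have hD2 : Dfin n.unpair.2 ⊆ Uinv U x := ((dsub_iff _ _).1 hd2).trans hmD
          have hxU : x ∈ ⋃ k, U k := by
            rcases hdom h with hx | hx
            · exact hAU hx
            · exact hBU hx
          have hxA : x ∈ A := by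
            rw [hAeq]
            exact Set.mem_iUnion₂.2 ⟨n.unpair.1, hnS, (mem_hatU_iff U _ x).2 ⟨hxU, hD1⟩⟩
          exact (hWAp x ⟨hxA, h⟩ l).2 ⟨n.unpair.2, hnW, hD2⟩
        · obtain ⟨n, hnS, hnW, hd1, hd2⟩ := hmW
          have hD1 : Dfin n.unpair.1 ⊆ Uinv U x := ((dsub_iff _ _).1 hd1).trans hmD
          have hD2 : Dfin n.unpair.2 ⊆ Uinv U x := ((dsub_iff _ _).1 hd2).trans hmD
          have hxU : x ∈ ⋃ k, U k := by
            rcases hdom h with hx | hx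
            · exact hAU hx
            · exact hBU hx
          have hxB : x ∈ B := by
            rw [hBeq]
            exact Set.mem_iUnion₂.2 ⟨n.unpair.1, hnS, (mem_hatU_iff U _ x).2 ⟨hxU, hD1⟩⟩
          exact (hWBp x ⟨hxB, h⟩ l).2 ⟨n.unpair.2, hnW, hD2⟩

theorem stmt_18 {α β : Type*} (U : ℕ → Set α) (V : ℕ → Set β)
    (𝒜 : Set (Set α)) (hfin : 𝒜.Finite) (heff : ∀ A ∈ 𝒜, EffUnion U A) :
    SJP {f : α →. β | UVComputable U V f} 𝒜 ∧
    ∀ 𝒦 ⊆ 𝒜, EffUnion U (⋃₀ 𝒦) ∧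
      ⋃₀ 𝒦 \ ⋃₀ (𝒜 \ 𝒦) ⊆ ⋃₀ 𝒦 ∧ ⋃₀ 𝒦 ∩ (⋃₀ (𝒜 \ 𝒦) \ ⋃₀ 𝒦) = ∅ := by
  constructor
  · refine Set.Finite.induction_on
      (motive := fun t _ => (∀ A ∈ t, EffUnion U A) → SJP {f : α →. β | UVComputable U V f} t)
      _ hfin ?_ ?_ heff
    · intro _ f hdom _
      refine ⟨fun x hx => absurd (hdom hx) (by simp), fun x h => absurd (hdom h) (by simp),
        ∅, re_false', fun x h l => absurd (hdom h) (by simp)⟩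
    · intro a s ha hs ih heff' f hdom hres
      have heffs : ∀ A ∈ s, EffUnion U A := fun A hA => heff' A (Set.mem_insert_of_mem _ hA)
      have hg : UVComputable U V (pRestrict f (⋃₀ s)) := by
        apply ih heffs (pRestrict f (⋃₀ s))
        · intro x hx
          exact hx.1
        · intro B hB
          rw [pRestrict_pRestrict f (Set.subset_sUnion_of_mem hB)]
          exact hres B (Set.mem_insert_of_mem _ hB)
      have hdom' : f.Dom ⊆ a ∪ ⋃₀ s := by
        rw [← Set.sUnion_insert]; exact hdom
      exact combine U V (heff' a (Set.mem_insert _ _)) (effUnion_sUnion hs heffs) f hdom'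
        (hres a (Set.mem_insert _ _)) hg
  · intro 𝒦 h𝒦
    refine ⟨effUnion_sUnion (hfin.subset h𝒦) (fun A hA => heff A (h𝒦 hA)),
      Set.diff_subset, ?_⟩
    ext x
    simp only [Set.mem_inter_iff, Set.mem_diff, Set.mem_empty_iff_false, iff_false]
    tauto
end
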